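/- Let a > 0, γ > 0, and x real. For |t| < a, the identity Σ_{n=0}^∞ [γ/(γ+n)] C_n(x; a) t^n/n! = Σ_{m,j=0}^∞ [(γ)_{m+j} (−x)_m / ((γ+1)_{m+j} m! j!)] (t/a)^m t^j holds, where C_n(x;a) = Σ_{k=0}^n [(−n)_k (−x)_k/k!](−1/a)^k are the Charlier polynomials and the right side is the Humbert confluent hypergeometric function Φ₁[γ, −x; γ+1; t/a, t]. -/

import Mathlib

/-!
Group the double series `Φ₁[γ, -x; γ + 1; t/a, t]` along the diagonals `m + j = n`. Since
`(γ)_n / (γ + 1)_n = γ / (γ + n)` and `(-n)_k (-1)^k = n! / (n - k)!`, the `n`-th diagonal sum is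
`γ / (γ + n) · C_n(x; a) tⁿ / n!`. The regrouping is legitimate because the double series
converges absolutely: as `γ / (γ + n) ≤ 1`, its terms are dominated by the products of the terms
of `∑ (-x)_m / m! (t/a)^m`, which converges by the ratio test for `|t| < a`, and of `e^|t|`.
-/

/-- Pochhammer symbol (rising factorial) of a real number. -/
noncomputable def poch (a : ℝ) (k : ℕ) : ℝ := ∏ i ∈ Finset.range k, (a + i)

/-- Charlier polynomials \(C_n(x;a)\). -/
noncomputable def charlier (a x : ℝ) (n : ℕ) : ℝ :=
  ∑ k ∈ Finset.range (n + 1),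
    poch (-(n : ℝ)) k * poch (-x) k / (Nat.factorial k) * (-1 / a) ^ k

/-- The associated Charlier polynomials, defined by their three-term recurrence
(with association parameter γ and the convention 𝓒₋₁ = 0, 𝓒₀ = 1). -/
def IsAssocCharlier (a γ : ℝ) (C : ℕ → ℝ → ℝ) : Prop :=
  (∀ x, C 0 x = 1) ∧
  (∀ x, a * C 1 x = γ + a - x) ∧
  (∀ x, ∀ n : ℕ,
    a * C (n + 2) x =
      ((n : ℝ) + 1 + γ + a - x) * C (n + 1) x - ((n : ℝ) + 1 + γ) * C n x)

open Finset Filter Topology Nat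

theorem HasSum.sum_antidiagonal {A α : Type*} [AddCommMonoid A] [HasAntidiagonal A]
    [AddCommMonoid α] [TopologicalSpace α] [ContinuousAdd α] [RegularSpace α]
    {f : A × A → α} {s : α} (h : HasSum f s) : HasSum (fun n => ∑ p ∈ antidiagonal n, f p) s :=
  (HasAntidiagonal.sigmaAntidiagonalEquivProd.hasSum_iff.2 h).sigma fun n => by
    rw [← sum_coe_sort]; exact hasSum_fintype _

lemma poch_eq_ascPochhammer_eval (a : ℝ) (k : ℕ) : poch a k = (ascPochhammer ℝ k).eval a := by
  induction k with
  | zero => simp [poch]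
  | succ k ih => rw [poch, prod_range_succ, ← poch, ih, ascPochhammer_succ_eval]

lemma poch_succ (a : ℝ) (n : ℕ) : poch a (n + 1) = poch a n * (a + n) :=
  prod_range_succ _ _

lemma poch_mul_add (a : ℝ) (n : ℕ) : poch a n * (a + n) = a * poch (a + 1) n := by
  rw [← poch_succ, poch, prod_range_succ', poch, mul_comm]
  simp only [Nat.cast_zero, add_zero, Nat.cast_succ, add_assoc, add_comm (1 : ℝ)]

lemma poch_div_poch_add_one {γ : ℝ} (hγ : 0 < γ) (n : ℕ) :
    poch γ n / poch (γ + 1) n = γ / (γ + n) := by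
  have hpos : 0 < poch (γ + 1) n := by
    rw [poch_eq_ascPochhammer_eval]; exact ascPochhammer_pos n _ (by linarith)
  rw [div_eq_div_iff hpos.ne' (by positivity), poch_mul_add]

lemma poch_neg_natCast (n k : ℕ) : poch (-n) k = (-1) ^ k * n.descFactorial k := by
  rw [poch_eq_ascPochhammer_eval, ascPochhammer_eval_neg_eq_descPochhammer,
    descPochhammer_eval_eq_descFactorial]

lemma summable_poch_div_factorial_mul_pow (c : ℝ) {r : ℝ} (hr : |r| < 1) :
    Summable fun m : ℕ => poch c m / m ! * r ^ m := by
  have hratio (m : ℕ) : ‖poch c (m + 1) / (m + 1)! * r ^ (m + 1)‖ =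
      |(c + m) / (1 + m)| * |r| * ‖poch c m / m ! * r ^ m‖ := by
    simp only [Real.norm_eq_abs, poch_succ, factorial_succ, pow_succ, Nat.cast_mul, abs_mul,
      abs_div, Nat.abs_cast]
    push_cast
    rw [abs_of_pos (by positivity : (0 : ℝ) < 1 + m)]
    field_simp
    ring
  have hlim : Tendsto (fun m : ℕ => |(c + m) / (1 + m)| * |r|) atTop (𝓝 |r|) := by
    simpa using (tendsto_add_mul_div_add_mul_atTop_nhds c 1 1 one_ne_zero).abs.mul_const |r|
  have hρ : |r| < (1 + |r|) / 2 := by linarith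
  refine summable_of_ratio_norm_eventually_le (r := (1 + |r|) / 2) (by linarith) ?_
  filter_upwards [hlim.eventually (gt_mem_nhds hρ)] with m hm
  rw [hratio]
  exact mul_le_mul_of_nonneg_right hm.le (norm_nonneg _)

lemma charlier_mul_pow_div_factorial (a x t : ℝ) (n : ℕ) :
    charlier a x n * t ^ n / n ! =
      ∑ k ∈ range (n + 1), poch (-x) k / k ! * (t / a) ^ k * (t ^ (n - k) / (n - k)!) := by
  rw [charlier, sum_mul, sum_div]
  refine sum_congr rfl fun k hk => ?_
  have hkn : k ≤ n := Nat.lt_succ_iff.mp (mem_range.mp hk)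
  have hfac : (n ! : ℝ) = n.descFactorial k * (n - k)! := by
    rw [mul_comm]; exact_mod_cast (factorial_mul_descFactorial hkn).symm
  have hpow : t ^ n = t ^ k * t ^ (n - k) := by rw [← pow_add, Nat.add_sub_cancel' hkn]
  have hdesc : (n.descFactorial k : ℝ) ≠ 0 := by
    exact_mod_cast (descFactorial_pos.mpr hkn).ne'
  have hsign : (-1 : ℝ) ^ k * (-1) ^ k = 1 := by rw [← mul_pow]; norm_num
  rw [poch_neg_natCast, hfac, hpow, div_pow, div_pow]
  field_simp
  linear_combination (poch (-x) k * t ^ k * t ^ (n - k) * a⁻¹ ^ k) * hsign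

noncomputable def humbertPhi1Term (α β σ u v : ℝ) (p : ℕ × ℕ) : ℝ :=
  poch α (p.1 + p.2) * poch β p.1 / (poch σ (p.1 + p.2) * p.1 ! * p.2 !) * u ^ p.1 * v ^ p.2

lemma humbertPhi1Term_add_one {γ : ℝ} (hγ : 0 < γ) (β u v : ℝ) (m j : ℕ) :
    humbertPhi1Term γ β (γ + 1) u v (m, j) =
      γ / (γ + (m + j : ℕ)) * (poch β m / m ! * u ^ m * (v ^ j / j !)) := by
  rw [humbertPhi1Term, ← poch_div_poch_add_one hγ]
  ring

lemma summable_humbertPhi1Term_add_one {γ : ℝ} (hγ : 0 < γ) (β : ℝ) {u : ℝ} (hu : |u| < 1)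
    (v : ℝ) : Summable (humbertPhi1Term γ β (γ + 1) u v) := by
  have hA := (summable_poch_div_factorial_mul_pow β hu).norm
  have hB := (Real.summable_pow_div_factorial v).norm
  refine (hA.mul_norm hB).of_norm_bounded fun ⟨m, j⟩ => ?_
  have hγn : ‖γ / (γ + (m + j : ℕ))‖ ≤ 1 := by
    rw [Real.norm_eq_abs, abs_of_pos (by positivity), div_le_one (by positivity)]
    linarith [(m + j).cast_nonneg (α := ℝ)]
  rw [humbertPhi1Term_add_one hγ, norm_mul]
  exact mul_le_of_le_one_left (norm_nonneg _) hγn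

lemma sum_antidiagonal_humbertPhi1Term_add_one {γ : ℝ} (hγ : 0 < γ) (a x t : ℝ) (n : ℕ) :
    ∑ p ∈ antidiagonal n, humbertPhi1Term γ (-x) (γ + 1) (t / a) t p =
      γ / (γ + n) * charlier a x n * t ^ n / n ! := by
  rw [mul_assoc, mul_div_assoc, charlier_mul_pow_div_factorial, mul_sum,
    Nat.sum_antidiagonal_eq_sum_range_succ_mk]
  refine sum_congr rfl fun k hk => ?_
  rw [humbertPhi1Term_add_one hγ, Nat.add_sub_cancel' (Nat.lt_succ_iff.mp (mem_range.mp hk))]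

/-- Modified generating function of Charlier polynomials in terms of the Humbert
function \(\Phi_1[\gamma, -x; \gamma+1; t/a, t]\). -/
theorem charlier_modified_generating_function (a γ x t : ℝ) (ha : 0 < a) (hγ : 0 < γ)
    (ht : |t| < a) :
    HasSum (fun n : ℕ => γ / (γ + (n : ℝ)) * charlier a x n * t ^ n / (Nat.factorial n))
      (∑' p : ℕ × ℕ,
        poch γ (p.1 + p.2) * poch (-x) p.1 /
          (poch (γ + 1) (p.1 + p.2) * (Nat.factorial p.1) * (Nat.factorial p.2)) *
          (t / a) ^ p.1 * t ^ p.2) := by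
  have hu : |t / a| < 1 := by rwa [abs_div, abs_of_pos ha, div_lt_one ha]
  have hdiag := (summable_humbertPhi1Term_add_one hγ (-x) hu t).hasSum.sum_antidiagonal
  rwa [funext (sum_antidiagonal_humbertPhi1Term_add_one hγ a x t)] at hdiag
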